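/- arXiv:2107.04841 — 3 statements merged into one kernel-verified Lean document; each statement's English description precedes it below -/
import Mathlib

section
/- Let f, g, h : ℂ → ℝ be subharmonic on the punctured disc 𝔻*, each with logarithmic growth near 0, and suppose f(z) ≤ g(z) + h(z) for all z ∈ 𝔻*. Then the generalized slopes satisfy f̂ ≤ ĝ + ĥ. (This is the key step establishing the triangle inequality for the distance d̂₁ in the paper.) -/
open Complex Metric Filter Set

noncomputable section

/-- The average of `f` over the circle of radius `r` centred at `a`:
`(1/(2π)) ∫₀^{2π} f (a + r e^{iθ}) dθ`. -/
def circleAvg (f : ℂ → ℝ) (a : ℂ) (r : ℝ) : ℝ :=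
  (1 / (2 * Real.pi)) *
    ∫ θ in (0:ℝ)..(2 * Real.pi), f (a + (r : ℂ) * Complex.exp ((θ : ℂ) * Complex.I))

/-- `f` is subharmonic on `U`: upper semicontinuous on `U` and satisfying the
sub-mean value inequality on every closed disc contained in `U`. -/
def IsSubharmonicOn (f : ℂ → ℝ) (U : Set ℂ) : Prop :=
  UpperSemicontinuousOn f U ∧
    ∀ a ∈ U, ∀ r : ℝ, 0 < r → closedBall a r ⊆ U → f a ≤ circleAvg f a r

/-- `u` is harmonic on `U`: continuous on `U` and satisfying the mean value
property on every closed disc contained in `U`. -/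
def IsHarmonicOn (u : ℂ → ℝ) (U : Set ℂ) : Prop :=
  ContinuousOn u U ∧
    ∀ a ∈ U, ∀ r : ℝ, 0 < r → closedBall a r ⊆ U → u a = circleAvg u a r

/-- The supremum of `f` on the circle `{|z| = r}`. -/
def circleSup (f : ℂ → ℝ) (r : ℝ) : ℝ := sSup (f '' sphere (0:ℂ) r)

/-- The punctured open unit disc `𝔻* = {z : 0 < |z| < 1}`. -/
def punctDisc : Set ℂ := {z : ℂ | 0 < ‖z‖ ∧ ‖z‖ < 1}

/-- `f` has logarithmic growth near `0` witnessed by `a`: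
`f(z) + a·log|z|` is bounded above on some punctured neighbourhood of `0`. -/
def LogGrowth (f : ℂ → ℝ) (a : ℝ) : Prop :=
  ∃ C ε : ℝ, 0 < ε ∧ ∀ z : ℂ, 0 < ‖z‖ → ‖z‖ < ε →
    f z + a * Real.log (‖z‖) ≤ C

/-- `L = lim_{r→0⁺} (sup_{|z|=r} f + a log r)/(-log r)`; the generalized slope
of `f` at `0` is then `f̂ = L + a`. -/
def HasSlope (f : ℂ → ℝ) (a L : ℝ) : Prop :=
  Tendsto (fun r : ℝ => (circleSup f r + a * Real.log r) / (-Real.log r))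
    (nhdsWithin 0 (Set.Ioi 0)) (nhds L)

/-- The open annulus `{s < |z| < t}`. -/
def annulus (s t : ℝ) : Set ℂ := {z : ℂ | s < ‖z‖ ∧ ‖z‖ < t}

/-- The closed annulus `{s ≤ |z| ≤ t}`. -/
def closedAnnulus (s t : ℝ) : Set ℂ := {z : ℂ | s ≤ ‖z‖ ∧ ‖z‖ ≤ t}

/-- The boundary `{|z| = s} ∪ {|z| = 1}` of the annulus `{s < |z| < 1}`. -/
def annulusBoundary (s : ℝ) : Set ℂ := sphere (0:ℂ) s ∪ sphere (0:ℂ) 1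

lemma usc_bddAbove {f : ℂ → ℝ} {s : Set ℂ} (hs : IsCompact s)
    (hf : UpperSemicontinuousOn f s) : BddAbove (f '' s) := by
  rcases s.eq_empty_or_nonempty with rfl | hne
  · simp
  have key : ∀ x ∈ s, ∃ U : Set ℂ, IsOpen U ∧ x ∈ U ∧ ∀ z ∈ U ∩ s, f z < f x + 1 := by
    intro x hx
    have h1 : {z | f z < f x + 1} ∈ nhdsWithin x s := hf x hx (f x + 1) (by linarith)
    rcases mem_nhdsWithin.mp h1 with ⟨U, hUo, hxU, hUs⟩
    exact ⟨U, hUo, hxU, fun z hz => hUs hz⟩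
  choose! U hUo hxU hUb using key
  obtain ⟨t, hts, hcov⟩ := hs.elim_nhds_subcover U (fun x hx => (hUo x hx).mem_nhds (hxU x hx))
  have htne : t.Nonempty := by
    obtain ⟨z0, hz0⟩ := hne
    obtain ⟨x, hx, -⟩ := Set.mem_iUnion₂.mp (hcov hz0)
    exact ⟨x, hx⟩
  refine ⟨t.sup' htne (fun x => f x + 1), ?_⟩
  rintro _ ⟨z, hz, rfl⟩
  obtain ⟨x, hxt, hzU⟩ := Set.mem_iUnion₂.mp (hcov hz)
  exact le_trans (hUb x (hts x hxt) z ⟨hzU, hz⟩).le (Finset.le_sup' (fun x => f x + 1) hxt)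


/-- **Subadditivity of generalized slopes.** If `f ≤ g + h` on `𝔻*` for
subharmonic functions of logarithmic growth, then `f̂ ≤ ĝ + ĥ`, where the
generalized slopes are `f̂ = Lf + af`, etc. -/
theorem slope_subadditive (f g h : ℂ → ℝ)
    (hf : IsSubharmonicOn f punctDisc) (hg : IsSubharmonicOn g punctDisc)
    (hh : IsSubharmonicOn h punctDisc)
    (af ag ah Lf Lg Lh : ℝ)
    (haf : LogGrowth f af) (hag : LogGrowth g ag) (hah : LogGrowth h ah)
    (hLf : HasSlope f af Lf) (hLg : HasSlope g ag Lg) (hLh : HasSlope h ah Lh)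
    (hle : ∀ z ∈ punctDisc, f z ≤ g z + h z) :
    Lf + af ≤ (Lg + ag) + (Lh + ah) := by
  have hmain : Lf ≤ (Lg + Lh) + (ag + ah - af) := by
    refine le_of_tendsto_of_tendsto hLf (((hLg.add hLh).add_const (ag + ah - af))) ?_
    have hmem : Set.Ioo (0:ℝ) 1 ∈ nhdsWithin (0:ℝ) (Set.Ioi 0) :=
      Ioo_mem_nhdsGT_of_mem (by constructor <;> norm_num)
    filter_upwards [hmem] with r hr
    have hr0 : 0 < r := hr.1
    have hl : Real.log r < 0 := Real.log_neg hr0 hr.2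
    have hpos : 0 < -Real.log r := by linarith
    have hne : -Real.log r ≠ 0 := ne_of_gt hpos
    have hsub : sphere (0:ℂ) r ⊆ punctDisc := by
      intro z hz
      rw [mem_sphere_zero_iff_norm] at hz
      simp only [punctDisc, Set.mem_setOf_eq, hz]
      exact ⟨hr0, hr.2⟩
    have hsne : (sphere (0:ℂ) r).Nonempty := NormedSpace.sphere_nonempty.mpr hr0.le
    have hbg : BddAbove (g '' sphere (0:ℂ) r) :=
      usc_bddAbove (isCompact_sphere 0 r) (hg.1.mono hsub)
    have hbh : BddAbove (h '' sphere (0:ℂ) r) :=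
      usc_bddAbove (isCompact_sphere 0 r) (hh.1.mono hsub)
    have h1 : circleSup f r ≤ circleSup g r + circleSup h r := by
      refine csSup_le (hsne.image f) ?_
      rintro _ ⟨z, hz, rfl⟩
      calc f z ≤ g z + h z := hle z (hsub hz)
        _ ≤ circleSup g r + circleSup h r :=
          add_le_add (le_csSup hbg ⟨z, hz, rfl⟩) (le_csSup hbh ⟨z, hz, rfl⟩)
    have key : circleSup f r + af * Real.log r ≤
        ((circleSup g r + ag * Real.log r) + (circleSup h r + ah * Real.log r))
          + (ag + ah - af) * (-Real.log r) := by nlinarith [h1]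
    calc (circleSup f r + af * Real.log r) / (-Real.log r)
        ≤ (((circleSup g r + ag * Real.log r) + (circleSup h r + ah * Real.log r))
            + (ag + ah - af) * (-Real.log r)) / (-Real.log r) := by gcongr
      _ = (circleSup g r + ag * Real.log r) / (-Real.log r)
            + (circleSup h r + ah * Real.log r) / (-Real.log r) + (ag + ah - af) := by
          rw [add_div, add_div, mul_div_assoc, div_self hne, mul_one]
  linarith
end
end

section
/- Let 0 ≤ s < 1 and let u be harmonic on the annulus A = {z ∈ ℂ : s < |z| < 1}. Then the circle average r ↦ (1/(2π)) ∫₀^{2π} u(r·e^{iθ}) dθ is an affine function of log r: there exist α, β ∈ ℝ such that (1/(2π)) ∫₀^{2π} u(r·e^{iθ}) dθ = α·log r + β for every r ∈ (s, 1). -/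
open Complex Metric Filter Set

noncomputable section

open MeasureTheory

lemma circleAvg_eq_circleMap (f : ℂ → ℝ) (a : ℂ) (r : ℝ) :
    circleAvg f a r = (1 / (2 * Real.pi)) * ∫ θ in (0:ℝ)..(2 * Real.pi), f (circleMap a r θ) := rfl

lemma isOpen_annulus (s t : ℝ) : IsOpen (annulus s t) := by
  have : annulus s t = (fun z : ℂ => ‖z‖) ⁻¹' (Ioo s t) := rfl
  rw [this]
  exact isOpen_Ioo.preimage continuous_norm

lemma isCompact_closedAnnulus {s t : ℝ} (ht : 0 ≤ t) : IsCompact (closedAnnulus s t) := by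
  have hc : IsClosed (closedAnnulus s t) := by
    have : closedAnnulus s t = (fun z : ℂ => ‖z‖) ⁻¹' (Icc s t) := rfl
    rw [this]; exact isClosed_Icc.preimage continuous_norm
  refine Metric.isCompact_of_isClosed_isBounded hc ?_
  refine (Metric.isBounded_closedBall (x := (0:ℂ)) (r := t)).subset fun z hz => ?_
  simpa [Complex.dist_eq] using hz.2

lemma cont_integrand {f : ℂ → ℝ} {U : Set ℂ} (hf : ContinuousOn f U) {a : ℂ} {r : ℝ}
    (h : ∀ θ : ℝ, circleMap a r θ ∈ U) :
    Continuous (fun θ : ℝ => f (circleMap a r θ)) :=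
  hf.comp_continuous (continuous_circleMap a r) h

lemma circleMap_mem_of_closedBall {U : Set ℂ} {a : ℂ} {r : ℝ} (hr : 0 < r)
    (h : closedBall a r ⊆ U) (θ : ℝ) : circleMap a r θ ∈ U :=
  h (circleMap_mem_closedBall a hr.le θ)

lemma circleAvg_const (c : ℝ) (a : ℂ) (r : ℝ) : circleAvg (fun _ => c) a r = c := by
  simp [circleAvg]
  field_simp

lemma circleAvg_le_of_le {f : ℂ → ℝ} {a : ℂ} {r M : ℝ}
    (hc : Continuous (fun θ : ℝ => f (circleMap a r θ)))
    (hb : ∀ θ : ℝ, f (circleMap a r θ) ≤ M) : circleAvg f a r ≤ M := by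
  rw [circleAvg_eq_circleMap]
  have h1 : (∫ θ in (0:ℝ)..(2 * Real.pi), f (circleMap a r θ)) ≤
      ∫ _ in (0:ℝ)..(2 * Real.pi), M := by
    apply intervalIntegral.integral_mono_on Real.two_pi_pos.le
      (hc.intervalIntegrable _ _) (intervalIntegrable_const)
    exact fun θ _ => hb θ
  have h2 : (∫ _ in (0:ℝ)..(2 * Real.pi), M) = 2 * Real.pi * M := by simp
  calc (1 / (2 * Real.pi)) * ∫ θ in (0:ℝ)..(2 * Real.pi), f (circleMap a r θ)
      ≤ (1 / (2 * Real.pi)) * (2 * Real.pi * M) := by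
        apply mul_le_mul_of_nonneg_left (h1.trans_eq h2)
        positivity
    _ = M := by field_simp

lemma circleAvg_neg (f : ℂ → ℝ) (a : ℂ) (r : ℝ) :
    circleAvg (fun z => -(f z)) a r = -circleAvg f a r := by
  simp [circleAvg, intervalIntegral.integral_neg]

lemma circleAvg_sub {f g : ℂ → ℝ} {a : ℂ} {r : ℝ}
    (hf : Continuous (fun θ : ℝ => f (circleMap a r θ)))
    (hg : Continuous (fun θ : ℝ => g (circleMap a r θ))) :
    circleAvg (fun z => f z - g z) a r = circleAvg f a r - circleAvg g a r := by
  rw [circleAvg_eq_circleMap, circleAvg_eq_circleMap, circleAvg_eq_circleMap, ← mul_sub,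
    ← intervalIntegral.integral_sub (hf.intervalIntegrable _ _) (hg.intervalIntegrable _ _)]

lemma zero_of_integral_zero {g : ℝ → ℝ} (hc : Continuous g) (hnn : ∀ θ, 0 ≤ g θ)
    (hz : (∫ θ in (0:ℝ)..(2 * Real.pi), g θ) = 0) {θ1 : ℝ}
    (h1 : θ1 ∈ Icc (0:ℝ) (2 * Real.pi)) : g θ1 = 0 := by
  by_contra hne
  have hpos : 0 < g θ1 := lt_of_le_of_ne (hnn θ1) (Ne.symm hne)
  have hev : ∀ᶠ θ in nhds θ1, g θ1 / 2 < g θ :=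
    (continuousAt_const (y := g θ1 / 2)).eventually_lt hc.continuousAt (by linarith)
  obtain ⟨δ, hδ, hball⟩ := Metric.eventually_nhds_iff.mp hev
  set l := max 0 (θ1 - δ / 2) with hl
  set u' := min (2 * Real.pi) (θ1 + δ / 2) with hu
  have hlu : l < u' := by
    apply max_lt <;> [skip; apply lt_min] <;>
      [exact lt_min Real.two_pi_pos (by nlinarith [h1.1]); nlinarith [h1.2]; nlinarith]
  have h0l : (0:ℝ) ≤ l := le_max_left _ _
  have hu2 : u' ≤ 2 * Real.pi := min_le_left _ _
  have hint : ∀ p q : ℝ, IntervalIntegrable g volume p q := fun p q => hc.intervalIntegrable p q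
  have key : (∫ θ in l..u', g θ) ≤ ∫ θ in (0:ℝ)..(2 * Real.pi), g θ := by
    rw [← intervalIntegral.integral_add_adjacent_intervals (hint 0 l) (hint l (2 * Real.pi)),
      ← intervalIntegral.integral_add_adjacent_intervals (hint l u') (hint u' (2 * Real.pi))]
    have i1 : 0 ≤ ∫ θ in (0:ℝ)..l, g θ :=
      intervalIntegral.integral_nonneg h0l (fun x _ => hnn x)
    have i2 : 0 ≤ ∫ θ in u'..(2 * Real.pi), g θ :=
      intervalIntegral.integral_nonneg hu2 (fun x _ => hnn x)
    linarith
  have key2 : (g θ1 / 2) * (u' - l) ≤ ∫ θ in l..u', g θ := by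
    have hm := intervalIntegral.integral_mono_on (f := fun _ => g θ1 / 2) hlu.le
      intervalIntegrable_const (hint l u') (fun x hx => ?_)
    · rw [intervalIntegral.integral_const, smul_eq_mul] at hm; linarith
    · have hx1 : θ1 - δ / 2 ≤ x := le_trans (le_max_right _ _) hx.1
      have hx2 : x ≤ θ1 + δ / 2 := le_trans hx.2 (min_le_right _ _)
      refine le_of_lt (hball ?_)
      rw [Real.dist_eq, abs_lt]
      constructor <;> linarith
  rw [hz] at key
  nlinarith

lemma holo_mvp {g : ℂ → ℂ} {z0 : ℂ} {r R : ℝ} (hr : 0 < r) (hR : r < R)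
    (hg : DifferentiableOn ℂ g (ball z0 R)) :
    (∫ θ in (0:ℝ)..(2 * Real.pi), g (circleMap z0 r θ)) = (2 * Real.pi : ℝ) • g z0 := by
  have hdc : DiffContOnCl ℂ g (ball z0 r) :=
    ⟨hg.mono (ball_subset_ball hR.le),
     hg.continuousOn.mono ((closure_ball_subset_closedBall).trans (closedBall_subset_ball hR))⟩
  have h := hdc.circleIntegral_sub_inv_smul (mem_ball_self hr)
  rw [circleIntegral] at h
  simp only [deriv_circleMap, circleMap_sub_center, smul_eq_mul] at h
  have heq : ∀ θ : ℝ, circleMap 0 r θ * I * ((circleMap 0 r θ)⁻¹ * g (circleMap z0 r θ))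
      = I * g (circleMap z0 r θ) := by
    intro θ
    have hne : circleMap 0 r θ ≠ 0 := by
      simp [circleMap_eq_center_iff]; exact hr.ne'
    field_simp
  rw [intervalIntegral.integral_congr (fun θ _ => heq θ), intervalIntegral.integral_const_mul] at h
  have hI : (2 * Real.pi * I : ℂ) * g z0 = I * ((2 * Real.pi : ℝ) • g z0) := by
    simp [Complex.real_smul]
    ring
  exact mul_left_cancel₀ I_ne_zero (h.trans hI)

lemma log_mvp {z0 : ℂ} {r : ℝ} (hr : 0 < r) (hlt : r < ‖z0‖) :
    circleAvg (fun z => Real.log (‖z‖)) z0 r = Real.log (‖z0‖) := by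
  have habs : 0 < ‖z0‖ := hr.trans hlt
  have hz0 : z0 ≠ 0 := by simpa using habs.ne'
  set g : ℂ → ℂ := fun z => Complex.log (z / z0) with hgdef
  have hgd : DifferentiableOn ℂ g (ball z0 (‖z0‖)) := by
    intro z hz
    have hmem : z / z0 ∈ Complex.slitPlane := by
      have hn : ‖(z - z0) / z0‖ < 1 := by
        rw [norm_div]
        rw [mem_ball, Complex.dist_eq] at hz
        rw [div_lt_one (by simpa using habs)]
        simpa using hz
      have := Complex.mem_slitPlane_of_norm_lt_one hn
      have he : 1 + (z - z0) / z0 = z / z0 := by field_simp; ring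
      rwa [he] at this
    exact ((Complex.differentiableAt_log hmem).comp z
      (differentiableAt_id.div_const z0)).differentiableWithinAt
  have hcm : ∀ θ : ℝ, circleMap z0 r θ ∈ ball z0 (‖z0‖) := by
    intro θ
    rw [mem_ball]
    simpa [dist_eq, circleMap, Complex.norm_exp_ofReal_mul_I, abs_of_pos hr] using hlt
  have hcmlb : ∀ θ : ℝ, ‖z0‖ - r ≤ ‖circleMap z0 r θ‖ := by
    intro θ
    have h2 : ‖z0 - circleMap z0 r θ‖ = r := by
      rw [norm_sub_rev]
      have := circleMap_sub_center z0 r θ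
      rw [this, norm_circleMap_zero, abs_of_pos hr]
    have h3 := norm_sub_norm_le z0 (circleMap z0 r θ)
    rw [h2] at h3
    linarith
  have hcmpos : ∀ θ : ℝ, 0 < ‖circleMap z0 r θ‖ := fun θ =>
    lt_of_lt_of_le (by linarith) (hcmlb θ)
  -- integral of g over the circle
  have hint := holo_mvp hr hlt hgd
  have hg0 : g z0 = 0 := by simp [hgdef, div_self hz0]
  rw [hg0, smul_zero] at hint
  -- continuity of θ ↦ g (circleMap z0 r θ)
  have hgc : Continuous fun θ : ℝ => g (circleMap z0 r θ) :=
    (hgd.continuousOn.comp_continuous (continuous_circleMap z0 r) hcm)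
  -- real parts
  have hre : ∀ θ : ℝ, Real.log (‖circleMap z0 r θ‖) =
      (g (circleMap z0 r θ)).re + Real.log (‖z0‖) := by
    intro θ
    rw [hgdef]
    simp only [Complex.log_re, norm_div]
    rw [Real.log_div (hcmpos θ).ne' habs.ne']
    ring
  have hcre : Continuous fun θ : ℝ => (g (circleMap z0 r θ)).re := Complex.continuous_re.comp hgc
  have h1 : IntervalIntegrable (fun θ : ℝ => (g (circleMap z0 r θ)).re) volume 0 (2 * Real.pi) :=
    hcre.intervalIntegrable 0 (2 * Real.pi)
  have h2 : IntervalIntegrable (fun _ : ℝ => Real.log (‖z0‖)) volume 0 (2 * Real.pi) :=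
    intervalIntegrable_const
  have hire : (∫ θ in (0:ℝ)..(2 * Real.pi), (g (circleMap z0 r θ)).re) = 0 := by
    have hcc := Complex.reCLM.intervalIntegral_comp_comm
      (hgc.intervalIntegrable (μ := volume) 0 (2 * Real.pi))
    simp only [Complex.reCLM_apply] at hcc
    rw [hcc, hint]
    simp
  have hsplit := intervalIntegral.integral_add h1 h2
  rw [circleAvg_eq_circleMap,
    intervalIntegral.integral_congr (g := fun θ =>
      (g (circleMap z0 r θ)).re + Real.log (‖z0‖)) (fun θ _ => hre θ),
    hsplit, hire]
  rw [intervalIntegral.integral_const, smul_eq_mul]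
  field_simp
  ring

-- affine-in-log comparison functions have the mean value property away from 0
lemma affine_log_mvp (α β : ℝ) {z0 : ℂ} {r : ℝ} (hr : 0 < r) (hlt : r < ‖z0‖) :
    circleAvg (fun z => α * Real.log (‖z‖) + β) z0 r
      = α * Real.log (‖z0‖) + β := by
  have habs : 0 < ‖z0‖ := hr.trans hlt
  have hcmpos : ∀ θ : ℝ, 0 < ‖circleMap z0 r θ‖ := by
    intro θ
    have h2 : ‖z0 - circleMap z0 r θ‖ = r := by
      rw [norm_sub_rev]
      have := circleMap_sub_center z0 r θ
      rw [this, norm_circleMap_zero, abs_of_pos hr]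
    have h3 := norm_sub_norm_le z0 (circleMap z0 r θ)
    rw [h2] at h3
    linarith
  have hlc : Continuous fun θ : ℝ => Real.log (‖circleMap z0 r θ‖) := by
    apply Real.continuousOn_log.comp_continuous
      (continuous_norm.comp (continuous_circleMap z0 r))
    exact fun θ => by simpa using (hcmpos θ).ne'
  have hl := log_mvp hr hlt
  rw [circleAvg_eq_circleMap] at hl ⊢
  have h1 : IntervalIntegrable (fun θ : ℝ => α * Real.log (‖circleMap z0 r θ‖))
      volume 0 (2 * Real.pi) := (hlc.const_smul α).intervalIntegrable 0 (2 * Real.pi)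
  have h2 : IntervalIntegrable (fun _ : ℝ => β) volume 0 (2 * Real.pi) := intervalIntegrable_const
  rw [intervalIntegral.integral_add h1 h2, intervalIntegral.integral_const_mul,
    intervalIntegral.integral_const, smul_eq_mul]
  have hπ := Real.pi_ne_zero
  field_simp at hl
  rw [hl]
  field_simp
  ring

-- integral over a period is shift-invariant
lemma shift_invariant {g : ℝ → ℝ} (hper : Function.Periodic g (2 * Real.pi)) (ψ : ℝ) :
    (∫ θ in (0:ℝ)..(2 * Real.pi), g (θ + ψ)) = ∫ θ in (0:ℝ)..(2 * Real.pi), g θ := by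
  rw [intervalIntegral.integral_comp_add_right g ψ]
  have := hper.intervalIntegral_add_eq ψ 0
  simpa [add_comm] using this

lemma isPreconnected_annulus {a c : ℝ} (ha : 0 ≤ a) : IsPreconnected (annulus a c) := by
  have himg : annulus a c =
      (fun p : ℝ × ℝ => (p.1 : ℂ) * Complex.exp ((p.2 : ℂ) * Complex.I)) ''
        (Ioo a c ×ˢ (univ : Set ℝ)) := by
    ext z
    constructor
    · rintro ⟨h1, h2⟩
      refine ⟨(‖z‖, Complex.arg z), ⟨⟨h1, h2⟩, trivial⟩, ?_⟩
      exact Complex.norm_mul_exp_arg_mul_I z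
    · rintro ⟨⟨ρ, θ⟩, ⟨⟨h1, h2⟩, -⟩, rfl⟩
      have hρ : 0 ≤ ρ := le_trans ha h1.le
      constructor <;>
        · simp only [norm_mul, Complex.norm_real, Real.norm_eq_abs, Complex.norm_exp_ofReal_mul_I, mul_one]
          rw [_root_.abs_of_nonneg hρ]
          assumption
  rw [himg]
  apply IsPreconnected.image
  · exact (convex_Ioo a c).prod convex_univ |>.isPreconnected
  · apply Continuous.continuousOn
    exact (Complex.continuous_ofReal.comp continuous_fst).mul
      (Complex.continuous_exp.comp ((Complex.continuous_ofReal.comp continuous_snd).mul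
        continuous_const))

-- every point of the sphere is hit by circleMap with angle in [0, 2π]
lemma exists_circleMap_angle {z w : ℂ} {r : ℝ} (hr : 0 < r) (hw : ‖w - z‖ = r) :
    ∃ θ ∈ Icc (0:ℝ) (2 * Real.pi), circleMap z r θ = w := by
  have hne : w - z ≠ 0 := by
    intro h; rw [h] at hw; simp at hw; linarith
  have key : (r : ℂ) * Complex.exp ((Complex.arg (w - z) : ℂ) * Complex.I) = w - z := by
    rw [← hw]; exact Complex.norm_mul_exp_arg_mul_I (w - z)
  rcases le_or_gt 0 (Complex.arg (w - z)) with h | h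
  · refine ⟨Complex.arg (w - z), ⟨h, ?_⟩, ?_⟩
    · linarith [Complex.arg_le_pi (w - z), Real.pi_pos]
    · rw [circleMap]; rw [key]; ring
  · refine ⟨Complex.arg (w - z) + 2 * Real.pi, ⟨by linarith [Complex.neg_pi_lt_arg (w - z)], ?_⟩, ?_⟩
    · linarith [Complex.arg_le_pi (w - z)]
    · rw [circleMap]
      push_cast
      rw [add_mul, Complex.exp_add]
      have h2π : Complex.exp ((2 * Real.pi : ℝ) * Complex.I) = 1 := by
        push_cast; exact Complex.exp_two_pi_mul_I
      push_cast at h2π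
      rw [h2π, mul_one, key]
      ring

/-- Maximum principle on a closed annulus. -/
lemma max_principle {a c : ℝ} (ha : 0 < a) (hac : a < c) {v : ℂ → ℝ}
    (hv : ContinuousOn v (closedAnnulus a c))
    (hmvp : ∀ z ∈ annulus a c, ∀ r : ℝ, 0 < r → closedBall z r ⊆ annulus a c →
      v z = circleAvg v z r)
    (hbd : ∀ z : ℂ, ‖z‖ = a ∨ ‖z‖ = c → v z ≤ 0) :
    ∀ z ∈ closedAnnulus a c, v z ≤ 0 := by
  have hUK : annulus a c ⊆ closedAnnulus a c := fun z hz => ⟨hz.1.le, hz.2.le⟩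
  have hKcpt : IsCompact (closedAnnulus a c) := isCompact_closedAnnulus (by linarith)
  have hKne : (closedAnnulus a c).Nonempty := ⟨(a : ℂ), by
    constructor <;> simp [abs_of_pos ha] <;> linarith⟩
  obtain ⟨z0, hz0K, hmax⟩ := hKcpt.exists_isMaxOn hKne hv
  set M := v z0 with hM
  by_contra hcon
  push_neg at hcon
  obtain ⟨zbad, hzbad, hvbad⟩ := hcon
  have hMpos : 0 < M := lt_of_lt_of_le hvbad (hmax hzbad)
  -- z0 is in the open annulus
  have hz0U : z0 ∈ annulus a c := by
    rcases lt_or_eq_of_le hz0K.1 with h | h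
    · rcases lt_or_eq_of_le hz0K.2 with h2 | h2
      · exact ⟨h, h2⟩
      · exact absurd (hbd z0 (Or.inr h2)) (by linarith)
    · exact absurd (hbd z0 (Or.inl h.symm)) (by linarith)
  -- the set where v = M is open in the open annulus
  have hopen : IsOpen {z | z ∈ annulus a c ∧ v z = M} := by
    rw [Metric.isOpen_iff]
    rintro z ⟨hzU, hzM⟩
    obtain ⟨ε, hε, hball⟩ := Metric.isOpen_iff.mp (isOpen_annulus a c) z hzU
    refine ⟨ε / 2, by linarith, fun w hw => ?_⟩
    have hwd : dist w z < ε / 2 := mem_ball.mp hw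
    have hwU : w ∈ annulus a c := hball (mem_ball.mpr (by linarith))
    rcases eq_or_ne w z with rfl | hne
    · exact ⟨hwU, hzM⟩
    refine ⟨hwU, ?_⟩
    set r := dist w z with hrdef
    have hr : 0 < r := dist_pos.mpr hne
    have hsub : closedBall z r ⊆ annulus a c := fun x hx =>
      hball (mem_ball.mpr (lt_of_le_of_lt (mem_closedBall.mp hx) (by
        have : r < ε / 2 := hwd; linarith)))
    have hmv := hmvp z hzU r hr hsub
    have hcmK : ∀ θ : ℝ, circleMap z r θ ∈ closedAnnulus a c := fun θ =>
      hUK (hsub (circleMap_mem_closedBall z hr.le θ))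
    have hcont : Continuous fun θ : ℝ => v (circleMap z r θ) :=
      hv.comp_continuous (continuous_circleMap z r) hcmK
    have hle : ∀ θ : ℝ, v (circleMap z r θ) ≤ M := fun θ => hmax (hcmK θ)
    have hintv : (∫ θ in (0:ℝ)..(2 * Real.pi), v (circleMap z r θ)) = 2 * Real.pi * M := by
      rw [circleAvg_eq_circleMap] at hmv
      rw [hzM] at hmv
      have hπ := Real.pi_ne_zero
      field_simp at hmv
      linarith
    have hg0 : (∫ θ in (0:ℝ)..(2 * Real.pi), (M - v (circleMap z r θ))) = 0 := by
      rw [intervalIntegral.integral_sub intervalIntegrable_const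
        (hcont.intervalIntegrable 0 (2 * Real.pi)), hintv]
      simp
    obtain ⟨θ0, hθ0, hθ0w⟩ := exists_circleMap_angle hr (by
      rw [← Complex.dist_eq])
    have := zero_of_integral_zero (g := fun θ => M - v (circleMap z r θ))
      (continuous_const.sub hcont) (fun θ => sub_nonneg.mpr (hle θ)) hg0 hθ0
    simp only [hθ0w] at this
    linarith
  -- the set where v < M is open
  set S := {z | z ∈ annulus a c ∧ v z = M} with hS
  set T := {z | z ∈ annulus a c ∧ v z < M} with hT
  have hTopen : IsOpen T := by
    rw [isOpen_iff_mem_nhds]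
    rintro z ⟨hzU, hzM⟩
    have hKnhds : closedAnnulus a c ∈ nhds z :=
      Filter.mem_of_superset ((isOpen_annulus a c).mem_nhds hzU) hUK
    have hca : ContinuousAt v z := (hv z (hUK hzU)).continuousAt hKnhds
    exact Filter.inter_mem ((isOpen_annulus a c).mem_nhds hzU)
      (hca.preimage_mem_nhds (isOpen_Iio.mem_nhds hzM))
  -- connectedness: v ≡ M on the open annulus
  have hall : ∀ z ∈ annulus a c, v z = M := by
    intro z hz
    by_contra hne
    have hzT : z ∈ T := ⟨hz, lt_of_le_of_ne (hmax (hUK hz)) hne⟩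
    have hcover : annulus a c ⊆ S ∪ T := by
      intro x hx
      have hxle : v x ≤ M := hmax (hUK hx)
      rcases hxle.eq_or_lt with h | h
      · exact Or.inl ⟨hx, h⟩
      · exact Or.inr ⟨hx, h⟩
    obtain ⟨x, hx⟩ := isPreconnected_annulus (a := a) (c := c) ha.le S T hopen hTopen hcover
      ⟨z0, hz0U, ⟨hz0U, rfl⟩⟩ ⟨z, hz, hzT⟩
    exact absurd hx.2.1.2 (ne_of_lt hx.2.2.2)
  -- contradiction at the inner boundary
  have hbda : v (a : ℂ) ≤ 0 := hbd _ (Or.inl (by simp [abs_of_pos ha]))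
  have haK : (a : ℂ) ∈ closedAnnulus a c := by
    constructor <;> simp [abs_of_pos ha] <;> linarith
  have htt : Tendsto (fun t : ℝ => ((t : ℂ))) (nhdsWithin a (Ioi a)) (nhdsWithin (a : ℂ) (closedAnnulus a c)) := by
    rw [tendsto_nhdsWithin_iff]
    constructor
    · exact (Complex.continuous_ofReal.tendsto a).mono_left nhdsWithin_le_nhds
    · filter_upwards [Ioo_mem_nhdsGT_of_mem (Set.left_mem_Ico.mpr hac)] with t ht
      have h0t : 0 < t := lt_trans ha ht.1
      exact ⟨by simp [abs_of_pos h0t]; linarith [ht.1], by simp [abs_of_pos h0t]; linarith [ht.2]⟩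
  have hlim : Tendsto (fun t : ℝ => v ((t : ℂ))) (nhdsWithin a (Ioi a)) (nhds (v (a : ℂ))) :=
    ((hv (a : ℂ) haK).tendsto).comp htt
  have hlim2 : Tendsto (fun t : ℝ => v ((t : ℂ))) (nhdsWithin a (Ioi a)) (nhds M) := by
    apply Tendsto.congr' ?_ tendsto_const_nhds
    filter_upwards [Ioo_mem_nhdsGT_of_mem (Set.left_mem_Ico.mpr hac)] with t ht
    have h0t : 0 < t := lt_trans ha ht.1
    exact (hall ((t : ℂ)) ⟨by simp [abs_of_pos h0t]; linarith [ht.1],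
      by simp [abs_of_pos h0t]; linarith [ht.2]⟩).symm
  have := tendsto_nhds_unique hlim hlim2
  linarith

-- the circle average is continuous in the radius
lemma m_continuousAt {s : ℝ} (hs0 : 0 ≤ s) {u : ℂ → ℝ} (hc : ContinuousOn u (annulus s 1))
    {r0 : ℝ} (hr0 : r0 ∈ Ioo s 1) : ContinuousAt (fun r : ℝ => circleAvg u 0 r) r0 := by
  have hmem : ∀ {r : ℝ}, s < r → r < 1 → ∀ θ : ℝ, circleMap 0 r θ ∈ annulus s 1 := by
    intro r h1 h2 θ
    have h0r : 0 < r := lt_of_le_of_lt hs0 h1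
    constructor <;> rw [norm_circleMap_zero, _root_.abs_of_pos h0r] <;> assumption
  set δ := min (r0 - s) (1 - r0) / 2 with hδdef
  have hδ : 0 < δ := by
    have := hr0.1; have := hr0.2
    apply div_pos (lt_min (by linarith) (by linarith)) two_pos
  have hδ1 : s < r0 - δ := by
    have h1 := min_le_left (r0 - s) (1 - r0)
    have := hr0.1; rw [hδdef] at *; linarith
  have hδ2 : r0 + δ < 1 := by
    have h1 := min_le_right (r0 - s) (1 - r0)
    have := hr0.2; rw [hδdef] at *; linarith
  have hKsub : closedAnnulus (r0 - δ) (r0 + δ) ⊆ annulus s 1 := fun z hz =>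
    ⟨lt_of_lt_of_le hδ1 hz.1, lt_of_le_of_lt hz.2 hδ2⟩
  obtain ⟨C, hC⟩ := (isCompact_closedAnnulus (t := r0 + δ) (by
      have := hr0.1; linarith)).exists_bound_of_continuousOn (hc.mono hKsub)
  have hIoo : Ioo (r0 - δ) (r0 + δ) ∈ nhds r0 := Ioo_mem_nhds (by linarith) (by linarith)
  have hI : ContinuousAt (fun r : ℝ =>
      ∫ θ in (0:ℝ)..(2 * Real.pi), u (circleMap 0 r θ)) r0 := by
    apply intervalIntegral.continuousAt_of_dominated_interval (bound := fun _ => C)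
    · filter_upwards [hIoo] with r hr
      have h1 : s < r := lt_trans hδ1 hr.1
      have h2 : r < 1 := lt_trans hr.2 hδ2
      exact (hc.comp_continuous (continuous_circleMap 0 r) (hmem h1 h2)).aestronglyMeasurable
    · filter_upwards [hIoo] with r hr
      apply Filter.Eventually.of_forall
      intro θ _
      apply hC
      have h0r : 0 < r := by have := lt_trans hδ1 hr.1; linarith
      constructor <;> rw [norm_circleMap_zero, _root_.abs_of_pos h0r] <;> linarith [hr.1, hr.2]
    · exact intervalIntegrable_const
    · apply Filter.Eventually.of_forall
      intro θ _
      have hmemθ : circleMap 0 r0 θ ∈ annulus s 1 := hmem hr0.1 hr0.2 θ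
      have hca : ContinuousAt u (circleMap 0 r0 θ) :=
        (hc (circleMap 0 r0 θ) hmemθ).continuousAt ((isOpen_annulus s 1).mem_nhds hmemθ)
      have hcr : Continuous fun r : ℝ => circleMap 0 r θ := by
        simp only [circleMap]
        continuity
      exact ContinuousAt.comp (g := u) (f := fun r : ℝ => circleMap 0 r θ) (x := r0) hca hcr.continuousAt
  exact hI.const_mul _

-- rotating the argument of the circle average
lemma rot_integral {s t : ℝ} {u : ℂ → ℝ} (hc : ContinuousOn u (annulus s t)) {w : ℂ}
    (hw : w ∈ annulus s t) :
    (∫ φ in (0:ℝ)..(2 * Real.pi), u (Complex.exp ((φ : ℂ) * Complex.I) * w))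
      = ∫ θ in (0:ℝ)..(2 * Real.pi), u (circleMap 0 (‖w‖) θ) := by
  have hper : Function.Periodic (fun ψ : ℝ => u (circleMap 0 (‖w‖) ψ))
      (2 * Real.pi) := (periodic_circleMap 0 (‖w‖)).comp u
  have heq : ∀ φ : ℝ, u (Complex.exp ((φ : ℂ) * Complex.I) * w)
      = u (circleMap 0 (‖w‖) (φ + Complex.arg w)) := by
    intro φ
    congr 1
    rw [circleMap]
    push_cast
    rw [zero_add, add_mul, Complex.exp_add]
    rw [mul_comm (Complex.exp _) (Complex.exp _), ← mul_assoc]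
    rw [mul_assoc (‖w‖ : ℂ) _ _]
    nth_rewrite 1 [← Complex.norm_mul_exp_arg_mul_I w]
    ring
  rw [intervalIntegral.integral_congr (fun φ _ => heq φ)]
  exact shift_invariant hper (Complex.arg w)

lemma rot_avg {s t : ℝ} {u : ℂ → ℝ} (hc : ContinuousOn u (annulus s t)) {w : ℂ}
    (hw : w ∈ annulus s t) :
    circleAvg u 0 (‖w‖) = (1 / (2 * Real.pi)) *
      ∫ φ in (0:ℝ)..(2 * Real.pi), u (Complex.exp ((φ : ℂ) * Complex.I) * w) := by
  rw [rot_integral hc hw, circleAvg_eq_circleMap]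

-- rotation invariance of annuli and closed balls
lemma rot_ball_subset {s t : ℝ} {z0 : ℂ} {r : ℝ} (hsub : closedBall z0 r ⊆ annulus s t)
    (φ : ℝ) : closedBall (Complex.exp ((φ : ℂ) * Complex.I) * z0) r ⊆ annulus s t := by
  intro x hx
  set e := Complex.exp ((φ : ℂ) * Complex.I) with he
  have habse : ‖e‖ = 1 := Complex.norm_exp_ofReal_mul_I φ
  have hene : e ≠ 0 := by
    intro h; rw [h] at habse; simp at habse
  have hy : e⁻¹ * x ∈ closedBall z0 r := by
    rw [mem_closedBall, Complex.dist_eq] at hx ⊢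
    have : e⁻¹ * x - z0 = e⁻¹ * (x - e * z0) := by field_simp
    rw [this, norm_mul, norm_inv, habse]
    simpa using hx
  have := hsub hy
  have habs : ‖e⁻¹ * x‖ = ‖x‖ := by
    rw [norm_mul, norm_inv, habse]; simp
  rw [annulus, mem_setOf_eq, habs] at this
  exact this

-- the radialization of a harmonic function satisfies the mean value property
lemma F_mvp {s : ℝ} (hs0 : 0 ≤ s) {u : ℂ → ℝ} (hu2 : ContinuousOn u (annulus s 1))
    (hmvp : ∀ a ∈ annulus s 1, ∀ r : ℝ, 0 < r → closedBall a r ⊆ annulus s 1 →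
      u a = circleAvg u a r)
    {z0 : ℂ} {r : ℝ} (hr : 0 < r) (hsub : closedBall z0 r ⊆ annulus s 1) :
    circleAvg (fun z => circleAvg u 0 (‖z‖)) z0 r
      = circleAvg u 0 (‖z0‖) := by
  have h2π : (0:ℝ) ≤ 2 * Real.pi := Real.two_pi_pos.le
  have hπ := Real.pi_ne_zero
  have hz0 : z0 ∈ annulus s 1 := hsub (mem_closedBall_self hr.le)
  have hcm : ∀ θ : ℝ, circleMap z0 r θ ∈ annulus s 1 := fun θ =>
    hsub (circleMap_mem_closedBall z0 hr.le θ)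
  set H : ℝ × ℝ → ℝ :=
    fun p => u (Complex.exp ((p.2 : ℂ) * Complex.I) * circleMap z0 r p.1) with hHdef
  have hmemH : ∀ p : ℝ × ℝ,
      Complex.exp ((p.2 : ℂ) * Complex.I) * circleMap z0 r p.1 ∈ annulus s 1 := by
    rintro ⟨θ, φ⟩
    have := hcm θ
    rw [annulus, mem_setOf_eq] at this ⊢
    rwa [norm_mul, Complex.norm_exp_ofReal_mul_I, one_mul]
  have hH : Continuous H := by
    apply hu2.comp_continuous ?_ hmemH
    exact (Complex.continuous_exp.comp
        ((Complex.continuous_ofReal.comp continuous_snd).mul continuous_const)).mul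
      ((continuous_circleMap z0 r).comp continuous_fst)
  -- inner integral over θ for fixed φ
  have hinner : ∀ φ : ℝ, (∫ θ in (0:ℝ)..(2 * Real.pi), H (θ, φ))
      = 2 * Real.pi * u (Complex.exp ((φ : ℂ) * Complex.I) * z0) := by
    intro φ
    set e := Complex.exp ((φ : ℂ) * Complex.I) with he
    have hper : Function.Periodic (fun ψ : ℝ => u (circleMap (e * z0) r ψ)) (2 * Real.pi) :=
      (periodic_circleMap (e * z0) r).comp u
    have heq : ∀ θ : ℝ, H (θ, φ) = u (circleMap (e * z0) r (θ + φ)) := by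
      intro θ
      simp only [hHdef]
      congr 1
      rw [circleMap, circleMap]
      push_cast
      rw [add_mul, Complex.exp_add]
      ring
    rw [intervalIntegral.integral_congr (fun θ _ => heq θ),
      shift_invariant hper φ]
    have hez0 : e * z0 ∈ annulus s 1 := rot_ball_subset hsub φ (mem_closedBall_self hr.le)
    have hmv := hmvp (e * z0) hez0 r hr (rot_ball_subset hsub φ)
    rw [circleAvg_eq_circleMap] at hmv
    field_simp at hmv
    linarith
  -- Fubini
  have hint : MeasureTheory.Integrable (Function.uncurry fun θ φ : ℝ => H (θ, φ))
      ((volume.restrict (Ioc 0 (2 * Real.pi))).prod (volume.restrict (Ioc 0 (2 * Real.pi)))) := by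
    rw [Measure.prod_restrict, ← Measure.volume_eq_prod]
    have hi : MeasureTheory.IntegrableOn H (Icc 0 (2 * Real.pi) ×ˢ Icc 0 (2 * Real.pi)) volume :=
      hH.continuousOn.integrableOn_compact (isCompact_Icc.prod isCompact_Icc)
    exact hi.mono_set (prod_mono Ioc_subset_Icc_self Ioc_subset_Icc_self)
  have hswap : (∫ θ in (0:ℝ)..(2 * Real.pi), ∫ φ in (0:ℝ)..(2 * Real.pi), H (θ, φ))
      = ∫ φ in (0:ℝ)..(2 * Real.pi), ∫ θ in (0:ℝ)..(2 * Real.pi), H (θ, φ) := by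
    simp only [intervalIntegral.integral_of_le h2π]
    exact MeasureTheory.integral_integral_swap hint
  -- outer rotation integral
  have hout : (∫ φ in (0:ℝ)..(2 * Real.pi), u (Complex.exp ((φ : ℂ) * Complex.I) * z0))
      = ∫ θ in (0:ℝ)..(2 * Real.pi), u (circleMap 0 (‖z0‖) θ) :=
    rot_integral hu2 hz0
  -- put everything together
  rw [circleAvg_eq_circleMap]
  have hrepl : ∀ θ : ℝ, (fun z => circleAvg u 0 (‖z‖)) (circleMap z0 r θ)
      = (1 / (2 * Real.pi)) * ∫ φ in (0:ℝ)..(2 * Real.pi), H (θ, φ) := by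
    intro θ
    exact rot_avg hu2 (hcm θ)
  rw [intervalIntegral.integral_congr (fun θ _ => hrepl θ),
    intervalIntegral.integral_const_mul, hswap,
    intervalIntegral.integral_congr (fun φ _ => hinner φ),
    intervalIntegral.integral_const_mul, hout, circleAvg_eq_circleMap]
  field_simp

lemma key_interp {s : ℝ} (hs0 : 0 ≤ s) {u : ℂ → ℝ}
    (huc : ContinuousOn u (annulus s 1))
    (hmvp : ∀ a ∈ annulus s 1, ∀ r : ℝ, 0 < r → closedBall a r ⊆ annulus s 1 →
      u a = circleAvg u a r)
    {a c : ℝ} (has : s < a) (hac : a < c) (hc1 : c < 1) :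
    ∃ A B : ℝ, ∀ b ∈ Icc a c, circleAvg u 0 b = A * Real.log b + B := by
  have ha0 : 0 < a := lt_of_le_of_lt hs0 has
  have hc0 : 0 < c := lt_trans ha0 hac
  have hlog : Real.log a < Real.log c := Real.log_lt_log ha0 hac
  set m : ℝ → ℝ := fun r => circleAvg u 0 r with hmdef
  set A : ℝ := (m c - m a) / (Real.log c - Real.log a) with hA
  set B : ℝ := m a - A * Real.log a with hB
  refine ⟨A, B, ?_⟩
  have hend_a : A * Real.log a + B = m a := by rw [hB]; ring
  have hlogne : Real.log c - Real.log a ≠ 0 := sub_ne_zero.mpr hlog.ne'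
  have hend_c : A * Real.log c + B = m c := by
    rw [hB, hA]; field_simp; ring
  -- the comparison function and difference
  set F : ℂ → ℝ := fun z => m (‖z‖) with hF
  set hfun : ℂ → ℝ := fun z => A * Real.log (‖z‖) + B with hfn
  set v : ℂ → ℝ := fun z => F z - hfun z with hv
  have hsubann : closedAnnulus a c ⊆ annulus s 1 := fun z hz =>
    ⟨lt_of_lt_of_le has hz.1, lt_of_le_of_lt hz.2 hc1⟩
  have hsubann' : annulus a c ⊆ annulus s 1 := fun z hz =>
    hsubann ⟨hz.1.le, hz.2.le⟩
  -- continuity of F and hfun on the closed annulus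
  have hFc : ContinuousOn F (closedAnnulus a c) := by
    intro z hz
    have hzI : ‖z‖ ∈ Ioo s 1 := ⟨lt_of_lt_of_le has hz.1, lt_of_le_of_lt hz.2 hc1⟩
    exact ((m_continuousAt hs0 huc hzI).comp
      continuous_norm.continuousAt).continuousWithinAt
  have hhc : ContinuousOn hfun (closedAnnulus a c) := by
    intro z hz
    have hzne : ‖z‖ ≠ 0 := by
      have := hz.1; intro h; rw [h] at this; linarith
    exact (((Real.continuousAt_log hzne).comp
      continuous_norm.continuousAt).const_smul A |>.add continuousAt_const).continuousWithinAt
  have hvc : ContinuousOn v (closedAnnulus a c) := hFc.sub hhc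
  -- v satisfies the mean value property on the open annulus
  have hvmvp : ∀ z ∈ annulus a c, ∀ r : ℝ, 0 < r → closedBall z r ⊆ annulus a c →
      v z = circleAvg v z r := by
    intro z hz r hr hsub
    have hsub1 : closedBall z r ⊆ annulus s 1 := fun x hx => hsubann' (hsub hx)
    have hrz : r < ‖z‖ := by
      by_contra hcon
      push_neg at hcon
      have h0 : (0:ℂ) ∈ closedBall z r := by
        rw [mem_closedBall, dist_comm, Complex.dist_eq]
        simpa using hcon
      have := (hsub h0).1
      simp at this
      linarith
    have hFmv : circleAvg F z r = F z := F_mvp hs0 huc hmvp hr hsub1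
    have hhmv : circleAvg hfun z r = hfun z := affine_log_mvp A B hr hrz
    have hcmK : ∀ θ : ℝ, circleMap z r θ ∈ closedAnnulus a c := fun θ => by
      have h := hsub (circleMap_mem_closedBall z hr.le θ)
      exact ⟨h.1.le, h.2.le⟩
    have hFcm : Continuous fun θ : ℝ => F (circleMap z r θ) :=
      hFc.comp_continuous (continuous_circleMap z r) hcmK
    have hhcm : Continuous fun θ : ℝ => hfun (circleMap z r θ) :=
      hhc.comp_continuous (continuous_circleMap z r) hcmK
    show F z - hfun z = circleAvg (fun w => F w - hfun w) z r
    rw [circleAvg_sub hFcm hhcm, hFmv, hhmv]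
  -- boundary values vanish
  have hbdry : ∀ z : ℂ, ‖z‖ = a ∨ ‖z‖ = c → v z = 0 := by
    intro z hz
    rcases hz with h | h
    · show F z - hfun z = 0
      rw [hF, hfn]
      simp only [h]
      rw [hend_a]
      ring
    · show F z - hfun z = 0
      rw [hF, hfn]
      simp only [h]
      rw [hend_c]
      ring
  have hneg : ∀ z ∈ closedAnnulus a c, v z ≤ 0 :=
    max_principle ha0 hac hvc hvmvp (fun z hz => le_of_eq (hbdry z hz))
  have hpos : ∀ z ∈ closedAnnulus a c, 0 ≤ v z := by
    have := max_principle ha0 hac (v := fun z => -(v z)) (hvc.neg)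
      (fun z hz r hr hsub => by
        show -(v z) = circleAvg (fun w => -(v w)) z r
        rw [circleAvg_neg, ← hvmvp z hz r hr hsub])
      (fun z hz => by show -(v z) ≤ 0; rw [hbdry z hz]; simp)
    intro z hz
    have h4 : -(v z) ≤ 0 := this z hz
    linarith
  -- evaluate on the real segment
  intro b hb
  have hb0 : 0 < b := lt_of_lt_of_le ha0 hb.1
  have hbK : (b : ℂ) ∈ closedAnnulus a c := by
    constructor <;> simp only [Complex.norm_real, Real.norm_eq_abs, _root_.abs_of_pos hb0] <;>
      [exact hb.1; exact hb.2]
  have h1 := hneg _ hbK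
  have h2 := hpos _ hbK
  have h3 : v (b : ℂ) = 0 := le_antisymm h1 h2
  rw [hv, hF, hfn] at h3
  simp only [Complex.norm_real, Real.norm_eq_abs, _root_.abs_of_pos hb0] at h3
  linarith


theorem circle_average_affine_in_log' (s : ℝ) (hs0 : 0 ≤ s) (hs1 : s < 1)
    (u : ℂ → ℝ) (huc : ContinuousOn u (annulus s 1))
    (hmvp : ∀ a ∈ annulus s 1, ∀ r : ℝ, 0 < r → closedBall a r ⊆ annulus s 1 →
      u a = circleAvg u a r) :
    ∃ α β : ℝ, ∀ r ∈ Set.Ioo s 1, circleAvg u 0 r = α * Real.log r + β := by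
  set m : ℝ → ℝ := fun r => circleAvg u 0 r with hm
  set r1 : ℝ := (3 * s + 1) / 4 with hr1def
  set r2 : ℝ := (s + 3) / 4 with hr2def
  have hr1 : r1 ∈ Ioo s 1 := ⟨by rw [hr1def]; linarith, by rw [hr1def]; linarith⟩
  have hr2 : r2 ∈ Ioo s 1 := ⟨by rw [hr2def]; linarith, by rw [hr2def]; linarith⟩
  have hr12 : r1 < r2 := by rw [hr1def, hr2def]; linarith
  have hr1pos : 0 < r1 := lt_of_le_of_lt hs0 hr1.1
  have hlog12 : Real.log r1 < Real.log r2 := Real.log_lt_log hr1pos hr12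
  set α : ℝ := (m r2 - m r1) / (Real.log r2 - Real.log r1) with hα
  set β : ℝ := m r1 - α * Real.log r1 with hβ
  refine ⟨α, β, ?_⟩
  intro r hr
  set a : ℝ := (s + min r r1) / 2 with ha
  set c : ℝ := (max r r2 + 1) / 2 with hc
  have hminpos : s < min r r1 := lt_min hr.1 hr1.1
  have hmaxlt : max r r2 < 1 := max_lt hr.2 hr2.2
  have hsa : s < a := by rw [ha]; linarith
  have haminr : a < min r r1 := by rw [ha]; linarith
  have hmaxc : max r r2 < c := by rw [hc]; linarith
  have hc1 : c < 1 := by rw [hc]; linarith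
  have hac : a < c := by
    calc a < min r r1 := haminr
    _ ≤ r1 := min_le_right _ _
    _ < r2 := hr12
    _ ≤ max r r2 := le_max_right _ _
    _ < c := hmaxc
  obtain ⟨A, B, hAB⟩ := key_interp hs0 huc hmvp hsa hac hc1
  have hAr : m r = A * Real.log r + B := hAB r
    ⟨le_trans haminr.le (min_le_left _ _), le_trans (le_max_left _ _) hmaxc.le⟩
  have hAr1 : m r1 = A * Real.log r1 + B := hAB r1
    ⟨le_trans haminr.le (min_le_right _ _),
     le_trans (le_trans hr12.le (le_max_right _ _)) hmaxc.le⟩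
  have hAr2 : m r2 = A * Real.log r2 + B := hAB r2
    ⟨le_trans haminr.le (le_trans (min_le_right _ _) hr12.le),
     le_trans (le_max_right _ _) hmaxc.le⟩
  have hlogne : Real.log r2 - Real.log r1 ≠ 0 := sub_ne_zero.mpr hlog12.ne'
  have hαA : α = A := by
    rw [hα, hAr1, hAr2]
    field_simp
    ring
  have hβB : β = B := by
    rw [hβ, hαA, hAr1]
    ring
  rw [hαA, hβB]
  exact hAr


/-- **Circle averages of a harmonic function on an annulus are affine in `log r`.** -/
theorem circle_average_affine_in_log (s : ℝ) (hs0 : 0 ≤ s) (hs1 : s < 1)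
    (u : ℂ → ℝ) (hu : IsHarmonicOn u (annulus s 1)) :
    ∃ α β : ℝ, ∀ r ∈ Set.Ioo s 1, circleAvg u 0 r = α * Real.log r + β := by
  obtain ⟨h1, h2⟩ := hu
  exact circle_average_affine_in_log' s hs0 hs1 u h1 h2
end
end

section
/- Let U ⊆ ℂ be open and let (u_k) be a sequence of harmonic functions on U that is pointwise nondecreasing (u_k(z) ≤ u_{k+1}(z) for all z ∈ U and all k) and converges pointwise on U to a finite real-valued function u. Then u is harmonic on U and the convergence u_k → u is uniform on every compact subset of U (Harnack's principle). -/
open Complex Metric Filter Set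

noncomputable section

open MeasureTheory

private lemma periodic_circle (w : ℂ → ℝ) (a : ℂ) (r : ℝ) :
    Function.Periodic (fun θ : ℝ => w (a + (r:ℂ) * Complex.exp ((θ:ℂ) * Complex.I)))
      (2 * Real.pi) := by
  intro θ
  have h : ((θ + 2 * Real.pi : ℝ) : ℂ) * Complex.I
      = (θ:ℂ) * Complex.I + 2 * (Real.pi:ℂ) * Complex.I := by push_cast; ring
  simp only [h, Complex.exp_add, Complex.exp_two_pi_mul_I, mul_one]

private lemma continuous_circleMap' (a : ℂ) (r : ℝ) :
    Continuous (fun θ : ℝ => a + (r:ℂ) * Complex.exp ((θ:ℂ) * Complex.I)) := by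
  fun_prop

private lemma circleMap_mem (a : ℂ) {r : ℝ} (hr : 0 ≤ r) (θ : ℝ) :
    a + (r:ℂ) * Complex.exp ((θ:ℂ) * Complex.I) ∈ closedBall a r := by
  simp [Metric.mem_closedBall, dist_eq_norm, Complex.norm_exp_ofReal_mul_I, _root_.abs_of_nonneg hr]

private lemma continuous_comp_circle {U : Set ℂ} {w : ℂ → ℝ} (hw : ContinuousOn w U)
    {a : ℂ} {r : ℝ} (hr : 0 ≤ r) (hsub : closedBall a r ⊆ U) :
    Continuous (fun θ : ℝ => w (a + (r:ℂ) * Complex.exp ((θ:ℂ) * Complex.I))) :=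
  hw.comp_continuous (continuous_circleMap' a r) (fun θ => hsub (circleMap_mem a hr θ))

private lemma circle_integral_eq {U : Set ℂ} {w : ℂ → ℝ} (hw : IsHarmonicOn w U)
    {a : ℂ} {r : ℝ} (hr : 0 < r) (hsub : closedBall a r ⊆ U) :
    ∫ θ in Ioo (-Real.pi) Real.pi, w (a + (r:ℂ) * Complex.exp ((θ:ℂ) * Complex.I))
      = 2 * Real.pi * w a := by
  have hπ := Real.pi_pos
  have h0 := hw.2 a (hsub (mem_closedBall_self hr.le)) r hr hsub
  have h2 := (periodic_circle w a r).intervalIntegral_add_eq (-Real.pi) 0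
  have e1 : -Real.pi + 2 * Real.pi = Real.pi := by ring
  have e2 : (0:ℝ) + 2 * Real.pi = 2 * Real.pi := by ring
  rw [e1, e2] at h2
  rw [← integral_Ioc_eq_integral_Ioo,
    ← intervalIntegral.integral_of_le (by linarith : -Real.pi ≤ Real.pi), h2]
  rw [circleAvg] at h0
  field_simp at h0
  linarith [h0]

private lemma polar_symm (p : ℝ × ℝ) :
    Complex.polarCoord.symm p = (p.1 : ℂ) * Complex.exp ((p.2:ℂ) * Complex.I) := by
  rw [Complex.polarCoord_symm_apply, Complex.exp_mul_I]
  simp [← Complex.ofReal_cos, ← Complex.ofReal_sin]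

private lemma integral_ball_eq {U : Set ℂ} {w : ℂ → ℝ} (hw : IsHarmonicOn w U)
    {a : ℂ} {R : ℝ} (hR : 0 < R) (hsub : closedBall a R ⊆ U) :
    ∫ z in ball a R, w z = Real.pi * R^2 * w a := by
  have hπ := Real.pi_pos
  set F : ℝ × ℝ → ℝ :=
    fun p => p.1 * w (a + (p.1:ℂ) * Complex.exp ((p.2:ℂ) * Complex.I)) with hF
  have hgc : Continuous fun p : ℝ × ℝ =>
      a + (p.1:ℂ) * Complex.exp ((p.2:ℂ) * Complex.I) := by fun_prop
  have hcont : ContinuousOn F (Set.Icc 0 R ×ˢ Set.Icc (-Real.pi) Real.pi) := by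
    apply ContinuousOn.mul (continuous_fst.continuousOn)
    apply hw.1.comp hgc.continuousOn
    intro p hp
    exact hsub (closedBall_subset_closedBall hp.1.2 (circleMap_mem a hp.1.1 p.2))
  have hint : IntegrableOn F (Set.Ioo 0 R ×ˢ Set.Ioo (-Real.pi) Real.pi) :=
    (hcont.integrableOn_compact (isCompact_Icc.prod isCompact_Icc)).mono_set
      (Set.prod_mono Set.Ioo_subset_Icc_self Set.Ioo_subset_Icc_self)
  set f : ℂ → ℝ := (ball (0:ℂ) R).indicator (fun z => w (a + z)) with hf
  have hpolar := Complex.integral_comp_polarCoord_symm f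
  have hind : ∀ z : ℂ, (ball a R).indicator w (a + z)
      = (ball (0:ℂ) R).indicator (fun z => w (a+z)) z := by
    intro z
    have hmem : a + z ∈ ball a R ↔ z ∈ ball (0:ℂ) R := by
      simp [Metric.mem_ball, dist_eq_norm]
    by_cases hz : z ∈ ball (0:ℂ) R
    · rw [Set.indicator_of_mem hz, Set.indicator_of_mem (hmem.mpr hz)]
    · rw [Set.indicator_of_notMem hz, Set.indicator_of_notMem (fun h => hz (hmem.mp h))]
  have hRHS : ∫ z, f z = ∫ z in ball a R, w z := by
    calc ∫ z, f z = ∫ z, (ball a R).indicator w (a + z) := by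
          rw [hf]
          exact integral_congr_ae (Filter.Eventually.of_forall fun z => (hind z).symm)
      _ = ∫ z, (ball a R).indicator w z :=
          integral_add_left_eq_self ((ball a R).indicator w) a
      _ = ∫ z in ball a R, w z := integral_indicator measurableSet_ball
  have hLHS : (∫ p in polarCoord.target, p.1 • f (Complex.polarCoord.symm p))
      = ∫ p in Set.Ioo (0:ℝ) R ×ˢ Set.Ioo (-Real.pi) Real.pi, F p := by
    have hcongr : ∀ p ∈ polarCoord.target,
        p.1 • f (Complex.polarCoord.symm p)
          = (Set.Ioo (0:ℝ) R ×ˢ (Set.univ : Set ℝ)).indicator F p := by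
      intro p hp
      rw [polarCoord_target] at hp
      have hp1 : 0 < p.1 := hp.1
      have habs : ‖(p.1 : ℂ) * Complex.exp ((p.2:ℂ) * Complex.I)‖ = p.1 := by
        simp [Complex.norm_exp_ofReal_mul_I, _root_.abs_of_nonneg hp1.le]
      rw [polar_symm, hf]
      have hmem : ((p.1:ℂ) * Complex.exp ((p.2:ℂ) * Complex.I)) ∈ ball (0:ℂ) R ↔ p.1 < R := by
        rw [mem_ball_zero_iff, habs]
      by_cases hlt : p.1 < R
      · rw [Set.indicator_of_mem (hmem.mpr hlt),
          Set.indicator_of_mem (by exact ⟨⟨hp1, hlt⟩, Set.mem_univ _⟩)]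
        simp [hF, smul_eq_mul]
      · rw [Set.indicator_of_notMem (fun h => hlt (hmem.mp h)),
          Set.indicator_of_notMem (fun h => hlt h.1.2)]
        simp
    rw [setIntegral_congr_fun polarCoord.open_target.measurableSet hcongr,
      setIntegral_indicator (measurableSet_Ioo.prod MeasurableSet.univ),
      polarCoord_target, Set.prod_inter_prod,
      Set.inter_eq_right.mpr (fun x hx => hx.1), Set.inter_univ]
  have hfub : ∫ p in Set.Ioo (0:ℝ) R ×ˢ Set.Ioo (-Real.pi) Real.pi, F p
      = ∫ r in Set.Ioo (0:ℝ) R, ∫ θ in Set.Ioo (-Real.pi) Real.pi, F (r, θ) := by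
    rw [Measure.volume_eq_prod] at hint ⊢
    exact setIntegral_prod F hint
  have hinner : ∀ r ∈ Set.Ioo (0:ℝ) R,
      (∫ θ in Set.Ioo (-Real.pi) Real.pi, F (r, θ)) = r * (2 * Real.pi * w a) := by
    intro r hr
    have hsub' : closedBall a r ⊆ U := (closedBall_subset_closedBall hr.2.le).trans hsub
    simp only [hF]
    rw [integral_const_mul, circle_integral_eq hw hr.1 hsub']
  have houter : ∫ r in Set.Ioo (0:ℝ) R, (r * (2 * Real.pi * w a)) = Real.pi * R^2 * w a := by
    rw [integral_mul_const]
    have hid : ∫ r in Set.Ioo (0:ℝ) R, r = R^2/2 := by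
      rw [← integral_Ioc_eq_integral_Ioo, ← intervalIntegral.integral_of_le hR.le]
      simp [_root_.integral_id]
    rw [hid]; ring
  rw [← hRHS, ← hpolar, hLHS, hfub, setIntegral_congr_fun measurableSet_Ioo hinner, houter]

private lemma harnack_bound {U : Set ℂ} (hU : IsOpen U) {w : ℂ → ℝ} (hw : IsHarmonicOn w U)
    (hw0 : ∀ z ∈ U, 0 ≤ w z) {a : ℂ} {r : ℝ} (hr : 0 < r)
    (hsub : closedBall a (2*r) ⊆ U) {z : ℂ} (hz : z ∈ ball a r) : w z ≤ 4 * w a := by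
  have hπ := Real.pi_pos
  have hz2 : closedBall z r ⊆ closedBall a (2*r) := by
    apply closedBall_subset_closedBall'
    have := mem_ball.mp hz
    linarith
  have h1 : ∫ x in ball z r, w x = Real.pi * r^2 * w z :=
    integral_ball_eq hw hr (hz2.trans hsub)
  have h2 : ∫ x in ball a (2*r), w x = Real.pi * (2*r)^2 * w a :=
    integral_ball_eq hw (by linarith) hsub
  have hint : IntegrableOn w (ball a (2*r)) :=
    ((hw.1.mono hsub).integrableOn_compact (isCompact_closedBall a (2*r))).mono_set
      ball_subset_closedBall
  have hnn : 0 ≤ᵐ[volume.restrict (ball a (2*r))] w :=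
    ae_restrict_of_forall_mem measurableSet_ball
      (fun x hx => hw0 x (hsub (ball_subset_closedBall hx)))
  have hmono : ∫ x in ball z r, w x ≤ ∫ x in ball a (2*r), w x :=
    setIntegral_mono_set hint hnn
      (HasSubset.Subset.eventuallyLE
        (ball_subset_ball' (by have := mem_ball.mp hz; linarith)))
  rw [h1, h2] at hmono
  nlinarith [sq_nonneg r, mul_pos hπ (mul_pos hr hr)]

private lemma isHarmonicOn_sub {U : Set ℂ} {w1 w2 : ℂ → ℝ} (h1 : IsHarmonicOn w1 U)
    (h2 : IsHarmonicOn w2 U) : IsHarmonicOn (fun z => w1 z - w2 z) U := by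
  refine ⟨h1.1.sub h2.1, fun a ha r hr hsub => ?_⟩
  have i1 := (continuous_comp_circle h1.1 hr.le hsub).intervalIntegrable (μ := volume)
    (0:ℝ) (2*Real.pi)
  have i2 := (continuous_comp_circle h2.1 hr.le hsub).intervalIntegrable (μ := volume)
    (0:ℝ) (2*Real.pi)
  have e1 := h1.2 a ha r hr hsub
  have e2 := h2.2 a ha r hr hsub
  rw [circleAvg, intervalIntegral.integral_sub i1 i2, mul_sub, ← circleAvg, ← circleAvg,
    ← e1, ← e2]


/-- **Harnack's principle.** A pointwise nondecreasing sequence of harmonic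
functions on an open set `U`, converging pointwise to a finite function `v`,
has harmonic limit, and the convergence is uniform on compact subsets of `U`. -/
theorem harnack_principle (U : Set ℂ) (hU : IsOpen U) (u : ℕ → ℂ → ℝ) (v : ℂ → ℝ)
    (hharm : ∀ k, IsHarmonicOn (u k) U)
    (hmono : ∀ k, ∀ z ∈ U, u k z ≤ u (k + 1) z)
    (hlim : ∀ z ∈ U, Tendsto (fun k => u k z) atTop (nhds (v z))) :
    IsHarmonicOn v U ∧
      ∀ K : Set ℂ, K ⊆ U → IsCompact K → TendstoUniformlyOn u v atTop K := by
  have hπ := Real.pi_pos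
  have hmono2 : ∀ z ∈ U, Monotone fun k => u k z :=
    fun z hz => monotone_nat_of_le_succ (fun n => hmono n z hz)
  have hle_v : ∀ z ∈ U, ∀ k, u k z ≤ v z :=
    fun z hz k => (hmono2 z hz).ge_of_tendsto (hlim z hz) k
  have huc : ∀ K : Set ℂ, K ⊆ U → IsCompact K → TendstoUniformlyOn u v atTop K := by
    intro K hKU hK
    have key : ∀ z ∈ U, ∃ ρ : ℝ, 0 < ρ ∧ closedBall z (2*ρ) ⊆ U := by
      intro z hz
      obtain ⟨ε, hε, hball⟩ := Metric.isOpen_iff.mp hU z hz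
      exact ⟨ε/3, by linarith, (closedBall_subset_ball (by linarith)).trans hball⟩
    choose! ρ hρ hρU using key
    obtain ⟨t, ht1, ht2⟩ := hK.elim_nhds_subcover (fun x => ball x (ρ x))
      (fun x hx => ball_mem_nhds x (hρ x (hKU hx)))
    rw [Metric.tendstoUniformlyOn_iff]
    intro ε hε
    have hev : ∀ᶠ k in atTop, ∀ x ∈ t, v x - u k x < ε/8 := by
      rw [eventually_all_finset]
      intro x hx
      have hxU : x ∈ U := hKU (ht1 x hx)
      have hT : Tendsto (fun k => v x - u k x) atTop (nhds 0) := by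
        have := (hlim x hxU).const_sub (v x)
        simpa using this
      exact hT.eventually_lt_const (by linarith)
    filter_upwards [hev] with k hk z hz
    obtain ⟨x, hxt, hxball⟩ := Set.mem_iUnion₂.mp (ht2 hz)
    have hxU : x ∈ U := hKU (ht1 x hxt)
    have hzU : z ∈ U := hKU hz
    have hbound : ∀ m, k ≤ m → u m z - u k z ≤ 4 * (v x - u k x) := by
      intro m hm
      have hharm' : IsHarmonicOn (fun y => u m y - u k y) U :=
        isHarmonicOn_sub (hharm m) (hharm k)
      have hnn : ∀ y ∈ U, 0 ≤ u m y - u k y :=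
        fun y hy => sub_nonneg.mpr (hmono2 y hy hm)
      have h4 := harnack_bound hU hharm' hnn (hρ x hxU) (hρU x hxU) hxball
      have hxk : u m x ≤ v x := hle_v x hxU m
      linarith
    have hlimz : Tendsto (fun m => u m z - u k z) atTop (nhds (v z - u k z)) :=
      (hlim z hzU).sub tendsto_const_nhds
    have hvz : v z - u k z ≤ 4 * (v x - u k x) :=
      le_of_tendsto hlimz (eventually_atTop.mpr ⟨k, hbound⟩)
    have h48 : v x - u k x < ε/8 := hk x hxt
    rw [Real.dist_eq, _root_.abs_of_nonneg (sub_nonneg.mpr (hle_v z hzU k))]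
    linarith
  refine ⟨⟨?_, ?_⟩, huc⟩
  · intro z hz
    obtain ⟨ε, hε, hball⟩ := Metric.isOpen_iff.mp hU z hz
    have hsub : closedBall z (ε/2) ⊆ U := (closedBall_subset_ball (by linarith)).trans hball
    have hc := (huc _ hsub (isCompact_closedBall z (ε/2))).continuousOn
      (Filter.Eventually.of_forall fun k => (hharm k).1.mono hsub).frequently
    exact (hc.continuousAt (closedBall_mem_nhds z (by linarith))).continuousWithinAt
  · intro a ha r hr hsub
    have hvc : ContinuousOn v (closedBall a r) :=
      (huc _ hsub (isCompact_closedBall a r)).continuousOn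
        (Filter.Eventually.of_forall fun k => (hharm k).1.mono hsub).frequently
    set γ : ℝ → ℂ := fun θ => a + (r:ℂ) * Complex.exp ((θ:ℂ) * Complex.I) with hγ
    have hγmem : ∀ θ, γ θ ∈ closedBall a r := circleMap_mem a hr.le
    have hγU : ∀ θ, γ θ ∈ U := fun θ => hsub (hγmem θ)
    have hFk : ∀ k, Continuous fun θ => u k (γ θ) :=
      fun k => continuous_comp_circle (hharm k).1 hr.le hsub
    have hFv : Continuous fun θ => v (γ θ) :=
      hvc.comp_continuous (continuous_circleMap' a r) hγmem
    have htend : Tendsto (fun k => ∫ θ in (0:ℝ)..(2*Real.pi), u k (γ θ)) atTop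
        (nhds (∫ θ in (0:ℝ)..(2*Real.pi), v (γ θ))) := by
      apply intervalIntegral.tendsto_integral_filter_of_dominated_convergence
        (bound := fun θ => |u 0 (γ θ)| + |v (γ θ)|)
      · exact Filter.Eventually.of_forall fun k => ((hFk k).aestronglyMeasurable).restrict
      · refine Filter.Eventually.of_forall fun k => Filter.Eventually.of_forall fun θ _ => ?_
        rw [Real.norm_eq_abs, abs_le]
        constructor
        · have h1 := neg_abs_le (u 0 (γ θ))
          have h2 := hmono2 _ (hγU θ) (Nat.zero_le k)
          have h3 := abs_nonneg (v (γ θ))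
          simp only [] at h2 ⊢
          linarith
        · have h1 := le_abs_self (v (γ θ))
          have h2 := hle_v _ (hγU θ) k
          have h3 := abs_nonneg (u 0 (γ θ))
          linarith
      · exact ((hFk 0).abs.add hFv.abs).intervalIntegrable (μ := volume) _ _
      · exact Filter.Eventually.of_forall fun θ _ => hlim (γ θ) (hγU θ)
    have hca : ∀ f : ℂ → ℝ, circleAvg f a r
        = 1/(2*Real.pi) * ∫ θ in (0:ℝ)..(2*Real.pi), f (γ θ) := fun f => rfl
    have hAk : Tendsto (fun k => circleAvg (u k) a r) atTop (nhds (circleAvg v a r)) := by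
      rw [hca]
      exact Tendsto.congr (fun k => (hca (u k)).symm) (htend.const_mul (1/(2*Real.pi)))
    have h2 : Tendsto (fun k => u k a) atTop (nhds (circleAvg v a r)) :=
      hAk.congr (fun k => ((hharm k).2 a ha r hr hsub).symm)
    exact tendsto_nhds_unique (hlim a ha) h2
end
end
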